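/- arXiv:2603.26314 — 3 statements merged into one kernel-verified Lean document; each statement's English description precedes it below -/
import Mathlib

section
/- Claim of Prop. 3 core inequality: let q_j = 0, let a₁, a₂ ∈ ℝ² with ‖a₁‖, ‖a₂‖ > r and let q₁ = f(a₁), q₂ = f(a₂) be their spherical flips (so ‖q_i‖ = 2r − ‖a_i‖ < r). Then for every point p on the segment [q₁, q₂], the point a on segment [a₁, a₂] lying on the ray from 0 through p satisfies ‖p‖ + ‖a‖ ≤ 2r. -/
/-! With `φ m = m / (2r - m)` the flip inverts to `aᵢ = φ ‖aᵢ‖ • qᵢ`. Writing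
`a = u • a₁ + v • a₂` and comparing coefficients in the basis `q₁, q₂` shows that the ray scale
is `t = u φ ‖a₁‖ + v φ ‖a₂‖`, which by convexity of `φ` is at least `φ M` for
`M = u ‖a₁‖ + v ‖a₂‖ ≥ ‖a‖`. Hence `t ‖p‖ = ‖a‖ ≤ M ≤ t (2r - M)`, i.e.
`‖p‖ ≤ 2r - M ≤ 2r - ‖a‖`. -/

noncomputable def sphericalFlip (r : ℝ) (q : EuclideanSpace ℝ (Fin 2)) :
    EuclideanSpace ℝ (Fin 2) := (2 * r / ‖q‖) • q - q

theorem convexOn_div_sub {c : ℝ} (hc : 0 ≤ c) : ConvexOn ℝ (Set.Iio c) fun x ↦ x / (c - x) := by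
  refine ⟨convex_Iio c, fun x hx y hy a b ha hb hab ↦ ?_⟩
  obtain rfl : b = 1 - a := by linarith
  set z := a * x + (1 - a) * y
  have hx' : 0 < c - x := sub_pos.2 hx
  have hy' : 0 < c - y := sub_pos.2 hy
  have hz : 0 < c - z := sub_pos.2 <| (convex_Iio c) hx hy ha hb (add_sub_cancel a 1)
  have key : a * (x / (c - x)) + (1 - a) * (y / (c - y)) - z / (c - z) =
      a * (1 - a) * c * (x - y) ^ 2 / ((c - x) * (c - y) * (c - z)) := by
    field_simp
    ring
  rw [smul_eq_mul, smul_eq_mul, smul_eq_mul, smul_eq_mul, ← sub_nonneg, key]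
  positivity

theorem linearIndependent_pair_of_not_collinear {K V : Type*} [DivisionRing K] [AddCommGroup V]
    [Module K V] {x y : V} (h : ¬Collinear K ({0, x, y} : Set V)) :
    LinearIndependent K ![x, y] := by
  refine (LinearIndependent.pair_iff' (ne₁₂_of_not_collinear h).symm).2 fun c hc ↦ h ?_
  have hy : y ∈ line[K, (0 : V), x] := by
    simpa [← hc] using smul_vsub_vadd_mem_affineSpan_pair c (0 : V) x
  simpa [Set.insert_comm, Set.pair_comm] using collinear_insert_of_mem_affineSpan_pair hy

theorem LinearIndependent.eq_mul_add_mul_of_smul_eq {K V : Type*} [CommRing K] [AddCommGroup V]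
    [Module K V] {x₁ x₂ : V} {α β t u v k₁ k₂ : K} (hx : LinearIndependent K ![x₁, x₂])
    (hαβ : α + β = 1) (h : u • k₁ • x₁ + v • k₂ • x₂ = t • (α • x₁ + β • x₂)) :
    t = u * k₁ + v * k₂ := by
  have hcoeff : (u * k₁) • x₁ + (v * k₂) • x₂ = (t * α) • x₁ + (t * β) • x₂ := by
    rw [mul_smul, mul_smul, h]
    module
  obtain ⟨h₁, h₂⟩ := hx.eq_of_pair hcoeff
  linear_combination t * hαβ.symm - h₁ - h₂

theorem smul_sphericalFlip {r : ℝ} {q : EuclideanSpace ℝ (Fin 2)} (hq : ‖q‖ ≠ 2 * r) :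
    (‖q‖ / (2 * r - ‖q‖)) • sphericalFlip r q = q := by
  rcases eq_or_ne q 0 with rfl | hq₀
  · simp [sphericalFlip]
  have hm : ‖q‖ ≠ 0 := norm_ne_zero_iff.2 hq₀
  have hs : 2 * r - ‖q‖ ≠ 0 := sub_ne_zero.2 hq.symm
  have hscale : ‖q‖ / (2 * r - ‖q‖) * (2 * r / ‖q‖) - ‖q‖ / (2 * r - ‖q‖) = 1 := by
    field_simp
  rw [sphericalFlip, smul_sub, smul_smul, ← sub_smul, hscale, one_smul]

theorem chord_flip_inequality_general (r : ℝ)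
    (a₁ a₂ : EuclideanSpace ℝ (Fin 2))
    (ha₁' : ‖a₁‖ < 2 * r) (ha₂' : ‖a₂‖ < 2 * r)
    (q₁ q₂ : EuclideanSpace ℝ (Fin 2))
    (hq₁ : q₁ = sphericalFlip r a₁) (hq₂ : q₂ = sphericalFlip r a₂)
    (hnc : ¬ Collinear ℝ ({0, q₁, q₂} : Set (EuclideanSpace ℝ (Fin 2))))
    (p a : EuclideanSpace ℝ (Fin 2))
    (hp : p ∈ segment ℝ q₁ q₂) (ha : a ∈ segment ℝ a₁ a₂)
    (t : ℝ) (ht : 0 < t) (hray : a = t • p) :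
    ‖p‖ + ‖a‖ ≤ 2 * r := by
  obtain ⟨α, β, -, -, hαβ, rfl⟩ := hp
  obtain ⟨u, v, hu, hv, huv, rfl⟩ := ha
  have hflip₁ : (‖a₁‖ / (2 * r - ‖a₁‖)) • q₁ = a₁ := hq₁ ▸ smul_sphericalFlip ha₁'.ne
  have hflip₂ : (‖a₂‖ / (2 * r - ‖a₂‖)) • q₂ = a₂ := hq₂ ▸ smul_sphericalFlip ha₂'.ne
  have ht_eq : t = u * (‖a₁‖ / (2 * r - ‖a₁‖)) + v * (‖a₂‖ / (2 * r - ‖a₂‖)) :=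
    (linearIndependent_pair_of_not_collinear hnc).eq_mul_add_mul_of_smul_eq hαβ
      (by rw [hflip₁, hflip₂, hray])
  set M := u * ‖a₁‖ + v * ‖a₂‖
  have hM : M < 2 * r := convex_Iio (2 * r) ha₁' ha₂' hu hv huv
  have ha_le : ‖u • a₁ + v • a₂‖ ≤ M := convexOn_univ_norm.2 trivial trivial hu hv huv
  have hM_le : M / (2 * r - M) ≤ t :=
    ht_eq ▸ (convexOn_div_sub (by linarith [norm_nonneg a₁])).2 ha₁' ha₂' hu hv huv
  have hp_le : ‖α • q₁ + β • q₂‖ ≤ 2 * r - M := by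
    refine le_of_mul_le_mul_left ?_ ht
    calc t * ‖α • q₁ + β • q₂‖ = ‖u • a₁ + v • a₂‖ := by
          rw [hray, norm_smul, Real.norm_of_nonneg ht.le]
      _ ≤ M := ha_le
      _ ≤ t * (2 * r - M) := (div_le_iff₀ (sub_pos.2 hM)).1 hM_le
  linarith

/-- core inequality of Prop. 3: for `p` on the chord `[q₁, q₂]`
of the flipped points and `a` the ray-corresponding point on `[a₁, a₂]`,
`‖p‖ + ‖a‖ ≤ 2r`. -/
theorem chord_flip_inequality (r : ℝ) (hr : 0 < r)
    (a₁ a₂ : EuclideanSpace ℝ (Fin 2))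
    (ha₁ : r < ‖a₁‖) (ha₂ : r < ‖a₂‖)
    (ha₁' : ‖a₁‖ < 2 * r) (ha₂' : ‖a₂‖ < 2 * r)
    (q₁ q₂ : EuclideanSpace ℝ (Fin 2))
    (hq₁ : q₁ = sphericalFlip r a₁) (hq₂ : q₂ = sphericalFlip r a₂)
    (hnc : ¬ Collinear ℝ ({0, q₁, q₂} : Set (EuclideanSpace ℝ (Fin 2))))
    (p a : EuclideanSpace ℝ (Fin 2))
    (hp : p ∈ segment ℝ q₁ q₂) (ha : a ∈ segment ℝ a₁ a₂)
    (t : ℝ) (ht : 0 < t) (hray : a = t • p) :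
    ‖p‖ + ‖a‖ ≤ 2 * r :=
  chord_flip_inequality_general r a₁ a₂ ha₁' ha₂' q₁ q₂ hq₁ hq₂ hnc p a hp ha t ht hray
end

section
/- For positive reals u₁, u₂ (with u₁, u₂ < r) and v_i = 2r − u_i, define g(x) = u₁u₂/x + v₁v₂/(2r − x) on the interval between u₁ and u₂ (where min(u₁,u₂) ≤ x ≤ max(u₁,u₂) and 0 < x < 2r). Then g(x) ≤ 2r for all x in this interval. -/
/-- the function `g(x) = u₁u₂/x + v₁v₂/(2r − x)` with
`vᵢ = 2r − uᵢ` is bounded by `2r` on the interval between `u₁` and `u₂`. -/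
theorem g_le_two_r (r u₁ u₂ : ℝ) (hr : 0 < r)
    (hu₁ : 0 < u₁) (hu₁r : u₁ < r) (hu₂ : 0 < u₂) (hu₂r : u₂ < r)
    (x : ℝ) (hx₁ : min u₁ u₂ ≤ x) (hx₂ : x ≤ max u₁ u₂) :
    u₁ * u₂ / x + (2 * r - u₁) * (2 * r - u₂) / (2 * r - x) ≤ 2 * r := by
  have hx0 : 0 < x := lt_of_lt_of_le (lt_min hu₁ hu₂) hx₁
  have hx2r : x < 2 * r := lt_of_le_of_lt hx₂ (by rcases le_total u₁ u₂ with h | h <;>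
    simp [max_eq_right, max_eq_left, h] <;> linarith)
  have h2rx : 0 < 2 * r - x := by linarith
  have key : (x - u₁) * (x - u₂) ≤ 0 := by
    rcases le_total u₁ u₂ with h | h
    · rw [min_eq_left h] at hx₁; rw [max_eq_right h] at hx₂; nlinarith
    · rw [min_eq_right h] at hx₁; rw [max_eq_left h] at hx₂; nlinarith
  rw [div_add_div _ _ hx0.ne' h2rx.ne', div_le_iff₀ (by positivity)]
  nlinarith [mul_nonneg hr.le (neg_nonneg.2 key)]
end

section
/- A star-convex region intersected with a triangle having the star center as a vertex, where the region's boundary within the triangle is the flipped image of a chord: the set W_j ∩ Δ(0, a_k, a_{k+1}) is convex, where W_j = {t·u : u unit vector in the cone of the triangle, 0 ≤ t < ρ(u)} and ρ(u) = 2r − s(u) with s(u) the distance from 0 to the segment [a_k, a_{k+1}] along direction u. -/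
/-!
A point of the region is `c • a` with `a` on the chord, `c ≥ 0` and `(c + 1) * ‖a‖ < 2 * r`.
A convex combination of `c • a` and `d • b` with weights `t, u` equals `e • p` with `p` again on
the chord and `e = t * c + u * d`. The triangle inequality bounds `e * ‖p‖` by
`t * c * ‖a‖ + u * d * ‖b‖`, and concavity of `x ↦ x / (x + 1)` turns the two constraints on
`a` and `b` into `(e + 1) * ‖p‖ < 2 * r`.
-/

open Set

theorem concaveOn_div_add_one : ConcaveOn ℝ (Ici 0) fun x : ℝ => x / (x + 1) := by
  refine ⟨convex_Ici 0, fun x hx y hy a b ha hb hab => ?_⟩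
  rw [mem_Ici] at hx hy
  simp only [smul_eq_mul]
  rw [mul_div_assoc', mul_div_assoc', div_add_div _ _ (by positivity) (by positivity),
    div_le_div_iff₀ (by positivity) (by positivity)]
  obtain rfl : b = 1 - a := by linarith
  nlinarith [mul_nonneg (mul_nonneg ha hb) (sq_nonneg (x - y)), mul_nonneg ha hb]

theorem mul_le_mul_div_add_one {c α R : ℝ} (hc : 0 ≤ c) (h : (c + 1) * α ≤ R) :
    c * α ≤ R * (c / (c + 1)) := by
  rw [mul_div_assoc', le_div_iff₀ (by positivity)]
  nlinarith

section SphericalFlip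

variable {E : Type*} [SeminormedAddCommGroup E] [NormedSpace ℝ E]

theorem add_one_mul_norm_le_of_smul_eq_add {a b p : E} {t u c d R : ℝ}
    (ht : 0 ≤ t) (hu : 0 ≤ u) (htu : t + u = 1) (hc : 0 ≤ c) (hd : 0 ≤ d)
    (ha : (c + 1) * ‖a‖ ≤ R) (hb : (d + 1) * ‖b‖ ≤ R) (he : 0 < t * c + u * d)
    (hp : (t * c + u * d) • p = (t * c) • a + (u * d) • b) :
    (t * c + u * d + 1) * ‖p‖ ≤ R := by
  set e := t * c + u * d
  have hR : 0 ≤ R := le_trans (by positivity) ha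
  have hep : e * ‖p‖ ≤ R * (e / (e + 1)) := calc
    e * ‖p‖ = ‖(t * c) • a + (u * d) • b‖ := by rw [← hp, norm_smul, Real.norm_of_nonneg he.le]
    _ ≤ t * (c * ‖a‖) + u * (d * ‖b‖) := by
      refine (norm_add_le _ _).trans_eq ?_
      rw [norm_smul, norm_smul, Real.norm_of_nonneg (by positivity),
        Real.norm_of_nonneg (by positivity)]
      ring
    _ ≤ t * (R * (c / (c + 1))) + u * (R * (d / (d + 1))) :=
      add_le_add (mul_le_mul_of_nonneg_left (mul_le_mul_div_add_one hc ha) ht)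
        (mul_le_mul_of_nonneg_left (mul_le_mul_div_add_one hd hb) hu)
    _ = R * (t * (c / (c + 1)) + u * (d / (d + 1))) := by ring
    _ ≤ R * (e / (e + 1)) := by
      gcongr
      simpa only [smul_eq_mul] using concaveOn_div_add_one.2 hc hd ht hu htu
  rw [mul_div_assoc', le_div_iff₀ (by positivity)] at hep
  exact le_of_mul_le_mul_left (by linarith) he

/-- Along the ray through `a ∈ s`, which meets `s` at distance `‖a‖`, the region extends to
radius `2 * r - ‖a‖` (the spherical flip of `s`). -/
def sphericalFlipRegion (s : Set E) (r : ℝ) : Set E :=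
  {x | ∃ a ∈ s, ∃ c : ℝ, 0 ≤ c ∧ c * ‖a‖ < 2 * r - ‖a‖ ∧ x = c • a}

theorem Convex.sphericalFlipRegion {s : Set E} (hs : Convex ℝ s) (r : ℝ) :
    Convex ℝ (sphericalFlipRegion s r) := by
  rintro _ ⟨a, ha, c, hc, hac, rfl⟩ _ ⟨b, hb, d, hd, hbd, rfl⟩ t u ht hu htu
  rw [smul_smul, smul_smul]
  have htc : 0 ≤ t * c := mul_nonneg ht hc
  have hud : 0 ≤ u * d := mul_nonneg hu hd
  rcases (add_nonneg htc hud).eq_or_lt with he | he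
  · obtain ⟨htc0, hud0⟩ := (add_eq_zero_iff_of_nonneg htc hud).1 he.symm
    refine ⟨a, ha, 0, le_rfl, ?_, by simp [htc0, hud0]⟩
    nlinarith [norm_nonneg a]
  · obtain ⟨p, hps, hp⟩ := hs.exists_mem_add_smul_eq ha hb htc hud
    refine ⟨p, hps, t * c + u * d, he.le, ?_, hp.symm⟩
    -- bounding both points by the larger of their constraints keeps the strict inequality
    have hpR := add_one_mul_norm_le_of_smul_eq_add ht hu htu hc hd
      (le_max_left _ ((d + 1) * ‖b‖)) (le_max_right ((c + 1) * ‖a‖) _) he hp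
    have hR : max ((c + 1) * ‖a‖) ((d + 1) * ‖b‖) < 2 * r := max_lt (by linarith) (by linarith)
    linarith

end SphericalFlip

theorem visibleRegion_triangle_convex_general (r : ℝ)
    (a₁ a₂ : EuclideanSpace ℝ (Fin 2)) :
    Convex ℝ {x : EuclideanSpace ℝ (Fin 2) |
      ∃ a ∈ segment ℝ a₁ a₂, ∃ c : ℝ,
        0 ≤ c ∧ c * ‖a‖ < 2 * r - ‖a‖ ∧ x = c • a} :=
  (convex_segment a₁ a₂).sphericalFlipRegion r

/-- Corollary 1: the part of the visible region inside the
triangle `Δ(0, a₁, a₂)`, bounded by the spherical flip of the chord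
`[a₁, a₂]`, is convex.  A direction hitting the chord at a point `a`
(at distance `s = ‖a‖ ∈ (r, 2r)`) extends to radius `ρ = 2r − s`; writing
points as `c • a` with `t = c‖a‖ < 2r − ‖a‖`, the region is as below. -/
theorem visibleRegion_triangle_convex (r : ℝ) (hr : 0 < r)
    (a₁ a₂ : EuclideanSpace ℝ (Fin 2))
    (hnc : ¬ Collinear ℝ ({0, a₁, a₂} : Set (EuclideanSpace ℝ (Fin 2))))
    (hseg : ∀ a ∈ segment ℝ a₁ a₂, r < ‖a‖ ∧ ‖a‖ < 2 * r) :
    Convex ℝ {x : EuclideanSpace ℝ (Fin 2) |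
      ∃ a ∈ segment ℝ a₁ a₂, ∃ c : ℝ,
        0 ≤ c ∧ c * ‖a‖ < 2 * r - ‖a‖ ∧ x = c • a} :=
  visibleRegion_triangle_convex_general r a₁ a₂
end
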